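/- (Existence of compatible auxiliaries.) Let P be an autoregressive model over Fin V, let s be a context, and let Φ : [0,1)^n → (Fin V)^n map auxiliaries to the tokens of the PTP recursion. For every target sequence (a_1, …, a_n) ∈ (Fin V)^n, there exist auxiliaries u ∈ [0,1)^n with Φ(u) = (a_1, …, a_n) if and only if ∏_{k=1}^{n} P(a_k ∣ s ++ [a_1, …, a_{k-1}]) > 0; equivalently, any sequence to which the model assigns nonzero autoregressive probability can be reverse-engineered from some choice of auxiliary variables. -/
import Mathlib


open MeasureTheory

def IsProbVec {V : ℕ} (p : Fin V → ℝ) : Prop :=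
  (∀ j, 0 ≤ p j) ∧ ∑ j, p j = 1

def cdf {V : ℕ} (p : Fin V → ℝ) (j : Fin V) : ℝ :=
  ∑ l ∈ Finset.Iic j, p l

def cdfLt {V : ℕ} (p : Fin V → ℝ) (j : Fin V) : ℝ :=
  ∑ l ∈ Finset.Iio j, p l

open Classical in
noncomputable def pick {V : ℕ} [NeZero V] (p : Fin V → ℝ) (u : ℝ) : Fin V :=
  if h : (Finset.univ.filter fun j => u < cdf p j).Nonempty then
    (Finset.univ.filter fun j => u < cdf p j).min' h
  else ⟨0, Nat.pos_of_ne_zero (NeZero.ne V)⟩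

/-- Tokens generated so far by the PTP recursion: `ptpPrefix P s u k = [t_1, …, t_k]`. -/
noncomputable def ptpPrefix {V : ℕ} [NeZero V] (P : List (Fin V) → Fin V → ℝ)
    (s : List (Fin V)) (u : ℕ → ℝ) : ℕ → List (Fin V)
  | 0 => []
  | k + 1 => ptpPrefix P s u k ++ [pick (P (s ++ ptpPrefix P s u k)) (u k)]

/-- The `(k+1)`-st token of the PTP recursion (0-indexed `k`):
`t_{k+1} = Pick(u_{k+1}, P(·∣ s ++ [t_1, …, t_k]))`. -/
noncomputable def ptpTok {V : ℕ} [NeZero V] (P : List (Fin V) → Fin V → ℝ)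
    (s : List (Fin V)) (u : ℕ → ℝ) (k : ℕ) : Fin V :=
  pick (P (s ++ ptpPrefix P s u k)) (u k)

/-- The PTP map `Φ : [0,1)^n → (Fin V)^n` sending auxiliaries to the generated tokens. -/
noncomputable def ptpMap {V : ℕ} [NeZero V] (P : List (Fin V) → Fin V → ℝ)
    (s : List (Fin V)) {n : ℕ} (u : Fin n → ℝ) (k : Fin n) : Fin V :=
  ptpTok P s (fun i => if h : i < n then u ⟨i, h⟩ else 0) k

/-- The list `[a_1, …, a_{j-1}]` of tokens strictly before position `j`. -/
def tokPrefix {V m : ℕ} (a : Fin m → Fin V) (j : Fin m) : List (Fin V) :=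
  List.ofFn (fun i : Fin j.1 => a (Fin.castLE j.2.le i))

section auxlem
variable {V : ℕ} [NeZero V]

lemma cdf_eq_add (p : Fin V → ℝ) (j : Fin V) : cdf p j = cdfLt p j + p j := by
  unfold cdf cdfLt
  rw [← Finset.Iio_insert, Finset.sum_insert (by simp)]
  ring

lemma cdf_le_one {p : Fin V → ℝ} (hp : IsProbVec p) (j : Fin V) : cdf p j ≤ 1 := by
  rw [← hp.2]
  exact Finset.sum_le_sum_of_subset_of_nonneg (Finset.subset_univ _) (fun i _ _ => hp.1 i)

lemma cdfLt_nonneg {p : Fin V → ℝ} (hp : IsProbVec p) (j : Fin V) : 0 ≤ cdfLt p j :=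
  Finset.sum_nonneg fun i _ => hp.1 i

lemma cdf_le_cdfLt_of_lt {p : Fin V → ℝ} (hp : IsProbVec p) {j j' : Fin V} (h : j' < j) :
    cdf p j' ≤ cdfLt p j := by
  refine Finset.sum_le_sum_of_subset_of_nonneg (fun i hi => ?_) (fun i _ _ => hp.1 i)
  simp only [Finset.mem_Iic] at hi
  simpa using lt_of_le_of_lt hi h

lemma cdfLt_mem {p : Fin V → ℝ} (hp : IsProbVec p) {j : Fin V} (hj : 0 < p j) :
    cdfLt p j ∈ Set.Ico (0 : ℝ) 1 := by
  refine ⟨cdfLt_nonneg hp j, ?_⟩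
  have h1 := cdf_le_one hp j
  rw [cdf_eq_add] at h1
  linarith

lemma pick_cdfLt {p : Fin V → ℝ} (hp : IsProbVec p) {j : Fin V} (hj : 0 < p j) :
    pick p (cdfLt p j) = j := by
  classical
  set u := cdfLt p j with hu
  have hjmem : j ∈ Finset.univ.filter fun i => u < cdf p i := by
    simp only [Finset.mem_filter, Finset.mem_univ, true_and]
    rw [cdf_eq_add]; linarith
  have hne : (Finset.univ.filter fun i => u < cdf p i).Nonempty := ⟨j, hjmem⟩
  rw [pick, dif_pos hne]
  refine le_antisymm (Finset.min'_le _ _ hjmem) ?_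
  by_contra hlt
  push_neg at hlt
  have hmem := Finset.min'_mem _ hne
  simp only [Finset.mem_filter, Finset.mem_univ, true_and] at hmem
  have := cdf_le_cdfLt_of_lt hp hlt
  linarith

lemma pos_of_pick_eq {p : Fin V → ℝ} (hp : IsProbVec p) {u : ℝ}
    (hu : u ∈ Set.Ico (0 : ℝ) 1) {j : Fin V} (h : pick p u = j) : 0 < p j := by
  classical
  have hnetop : (Finset.univ : Finset (Fin V)).Nonempty := Finset.univ_nonempty
  set jt := Finset.univ.max' hnetop with hjt
  have hcdf_top : cdf p jt = 1 := by
    rw [← hp.2]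
    unfold cdf
    congr 1
    apply Finset.eq_univ_iff_forall.2
    intro i
    simpa using Finset.le_max' _ i (Finset.mem_univ i)
  have htopmem : jt ∈ Finset.univ.filter fun i => u < cdf p i := by
    simp only [Finset.mem_filter, Finset.mem_univ, true_and, hcdf_top]
    exact hu.2
  have hne : (Finset.univ.filter fun i => u < cdf p i).Nonempty := ⟨jt, htopmem⟩
  rw [pick, dif_pos hne] at h
  have hjmem := h ▸ Finset.min'_mem _ hne
  simp only [Finset.mem_filter, Finset.mem_univ, true_and] at hjmem
  -- hjmem : u < cdf p j
  have hlow : cdfLt p j ≤ u := by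
    rcases Finset.eq_empty_or_nonempty (Finset.Iio j) with he | hne'
    · simp [cdfLt, he]; exact hu.1
    · set j' := (Finset.Iio j).max' hne' with hj'
      have hj'lt : j' < j :=
        Finset.mem_Iio.mp (Finset.max'_mem _ hne')
      have hIic : Finset.Iic j' = Finset.Iio j := by
        apply Finset.ext
        intro i
        simp only [Finset.mem_Iic, Finset.mem_Iio]
        constructor
        · intro hi; exact lt_of_le_of_lt hi hj'lt
        · intro hi; exact Finset.le_max' _ i (by simpa using hi)
      have hj'notmem : j' ∉ Finset.univ.filter fun i => u < cdf p i := by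
        intro hmem
        have := Finset.min'_le _ _ hmem
        rw [h] at this
        exact absurd hj'lt (not_lt.2 this)
      simp only [Finset.mem_filter, Finset.mem_univ, true_and, not_lt] at hj'notmem
      calc cdfLt p j = cdf p j' := by unfold cdf cdfLt; rw [hIic]
        _ ≤ u := hj'notmem
  have := cdf_eq_add p j
  linarith

end auxlem

lemma ptpPrefix_eq {V : ℕ} [NeZero V] (P : List (Fin V) → Fin V → ℝ) (s : List (Fin V))
    (u : ℕ → ℝ) {n : ℕ} (a : Fin n → Fin V) :
    ∀ m (hm : m ≤ n),
      (∀ i (hi : i < m), ptpTok P s u i = a ⟨i, lt_of_lt_of_le hi hm⟩) →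
      ptpPrefix P s u m = List.ofFn (fun i : Fin m => a (Fin.castLE hm i))
  | 0, hm, _ => by simp [ptpPrefix]
  | m + 1, hm, h => by
    have hmn : m ≤ n := le_of_lt hm
    have hpre := ptpPrefix_eq P s u a m hmn
      (fun i hi => h i (lt_trans hi (Nat.lt_succ_self m)))
    show ptpPrefix P s u m ++ [pick (P (s ++ ptpPrefix P s u m)) (u m)] = _
    have htok : pick (P (s ++ ptpPrefix P s u m)) (u m) = a ⟨m, hm⟩ :=
      h m (Nat.lt_succ_self m)
    rw [hpre] at htok
    rw [hpre, htok, List.ofFn_succ']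
    simp only [List.concat_eq_append]
    rfl


/-- **Existence of compatible auxiliaries.** There exist auxiliaries `u ∈ [0,1)^n` with
`Φ(u) = (a_1, …, a_n)` iff `∏_k P(a_k ∣ s ++ [a_1, …, a_{k-1}]) > 0`: any sequence with
nonzero autoregressive probability can be reverse-engineered from some auxiliary variables. -/
theorem exists_auxiliaries_iff {V : ℕ} [NeZero V] {n : ℕ}
    (P : List (Fin V) → Fin V → ℝ) (hP : ∀ s, IsProbVec (P s))
    (s : List (Fin V)) (a : Fin n → Fin V) :
    (∃ u : Fin n → ℝ, (∀ k, u k ∈ Set.Ico (0 : ℝ) 1) ∧ ptpMap P s u = a) ↔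
      0 < ∏ k, P (s ++ tokPrefix a k) (a k) := by

  constructor
  · rintro ⟨u, hu, hΦ⟩
    set u' : ℕ → ℝ := fun i => if h : i < n then u ⟨i, h⟩ else 0 with hu'
    have htok : ∀ i (hi : i < n), ptpTok P s u' i = a ⟨i, hi⟩ := by
      intro i hi
      exact congrFun hΦ ⟨i, hi⟩
    apply Finset.prod_pos
    intro k _
    have hpre := ptpPrefix_eq P s u' a k.1 k.2.le
      (fun i hi => htok i (lt_of_lt_of_le hi k.2.le))
    have hk : ptpTok P s u' k.1 = a k := by
      have := htok k.1 k.2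
      simpa using this
    rw [ptpTok, hpre] at hk
    have hmem : u' k.1 ∈ Set.Ico (0 : ℝ) 1 := by
      simp only [hu', k.2, dif_pos]
      exact hu k
    exact pos_of_pick_eq (hP _) hmem hk
  · intro hprod
    have hfac : ∀ k : Fin n, 0 < P (s ++ tokPrefix a k) (a k) := by
      intro k
      rcases lt_or_eq_of_le ((hP _).1 (a k)) with h | h
      · exact h
      · exfalso
        have : (∏ k, P (s ++ tokPrefix a k) (a k)) = 0 :=
          Finset.prod_eq_zero (Finset.mem_univ k) h.symm
        rw [this] at hprod
        exact lt_irrefl 0 hprod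
    set u : Fin n → ℝ := fun k => cdfLt (P (s ++ tokPrefix a k)) (a k) with hudef
    set u' : ℕ → ℝ := fun i => if h : i < n then u ⟨i, h⟩ else 0 with hu'
    have key : ∀ m, ∀ (hm : m < n), ptpTok P s u' m = a ⟨m, hm⟩ := by
      intro m
      induction m using Nat.strong_induction_on with
      | _ m ih =>
        intro hm
        have hpre := ptpPrefix_eq P s u' a m (le_of_lt hm)
          (fun i hi => ih i hi (lt_trans hi hm))
        have hval : u' m = cdfLt (P (s ++ tokPrefix a ⟨m, hm⟩)) (a ⟨m, hm⟩) := by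
          simp only [hu', hm, dif_pos, hudef]
        have hlist : tokPrefix a ⟨m, hm⟩ =
            List.ofFn (fun i : Fin m => a (Fin.castLE (le_of_lt hm) i)) := rfl
        rw [ptpTok, hpre, ← hlist, hval]
        exact pick_cdfLt (hP _) (hfac ⟨m, hm⟩)
    refine ⟨u, fun k => cdfLt_mem (hP _) (hfac k), ?_⟩
    funext k
    show ptpTok P s u' k.1 = a k
    have := key k.1 k.2
    simpa using this
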